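/- Let L be the Sturm–Liouville operator Lφ = −φ'' + Q(y)φ on (0,1) with Dirichlet boundary conditions, Q as above for the oscillatory shear U_n. If λ₂ is the second eigenvalue of L (whose eigenfunction φ₂ has exactly one zero z ∈ (0,1)), then λ₂ ≥ 0. -/

import Mathlib

open Real Set

/-- The Rayleigh-quotient potential of the oscillatory shear `U_n`. -/
noncomputable def oscQ (n : ℕ) (A : ℝ) (y : ℝ) : ℝ :=
  (-16 * π ^ 2 * n * A * Real.sin (4 * n * π * y)) /
    (y - 1/2 + (A / n) * Real.sin (4 * n * π * y))

/-!
Sturm comparison with `φ₀ = U_n - U_n(1/2)`, which solves `φ₀'' = Q φ₀` and, `U_n` being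
strictly increasing for `|A| < 1/(4π)`, vanishes only at `1/2`. If `λ₂ < 0`, let `[a, b]` be the
nodal interval of `φ₂` (`[0, z]` or `[z, 1]`) avoiding `1/2` in its interior. The Wronskian
`W = φ₂' φ₀ - φ₂ φ₀'` has `W' = -λ₂ φ₂ φ₀`, of constant sign on `(a, b)`, so `W` is strictly
monotone; but `W(a) = φ₂'(a) φ₀(a)` and `W(b) = φ₂'(b) φ₀(b)` have the opposite order.
-/
def SolvesOn (Q : ℝ → ℝ) (s : Set ℝ) (u : ℝ → ℝ) : Prop :=
  ∀ y ∈ s, HasDerivAt u (deriv u y) y ∧ HasDerivAt (deriv u) (Q y * u y) y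

namespace SolvesOn

variable {Q u : ℝ → ℝ} {s t : Set ℝ}

theorem mono (hu : SolvesOn Q s u) (hts : t ⊆ s) : SolvesOn Q t u :=
  fun y hy => hu y (hts hy)

theorem neg (hu : SolvesOn Q s u) : SolvesOn Q s (-u) := by
  intro y hy
  obtain ⟨hu₁, hu₂⟩ := hu y hy
  rw [deriv.neg']
  exact ⟨hu₁.neg, hu₂.neg.congr_deriv (mul_neg _ _).symm⟩

theorem continuousOn (hu : SolvesOn Q s u) : ContinuousOn u s :=
  fun y hy => (hu y hy).1.continuousAt.continuousWithinAt

theorem of_contDiff (hu : ContDiff ℝ 2 u) (heq : ∀ y ∈ s, deriv (deriv u) y = Q y * u y) :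
    SolvesOn Q s u := fun y hy =>
  ⟨(hu.differentiable two_ne_zero y).hasDerivAt,
    heq y hy ▸ (hu.differentiable_deriv_two y).hasDerivAt⟩

theorem hasDerivAt_wronskian {lam : ℝ} {ψ χ : ℝ → ℝ} (hψ : SolvesOn (fun y => Q y - lam) s ψ)
    (hχ : SolvesOn Q s χ) {y : ℝ} (hy : y ∈ s) :
    HasDerivAt (fun x => deriv ψ x * χ x - ψ x * deriv χ x) (-lam * (ψ y * χ y)) y := by
  obtain ⟨hψ₁, hψ₂⟩ := hψ y hy
  obtain ⟨hχ₁, hχ₂⟩ := hχ y hy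
  exact ((hψ₂.mul hχ₁).sub (hψ₁.mul hχ₂)).congr_deriv (by ring)

end SolvesOn

theorem IsPreconnected.forall_pos_or_forall_neg {s : Set ℝ} {f : ℝ → ℝ} (hs : IsPreconnected s)
    (hf : ContinuousOn f s) (hf₀ : ∀ x ∈ s, f x ≠ 0) :
    (∀ x ∈ s, 0 < f x) ∨ (∀ x ∈ s, f x < 0) := by
  by_contra! ⟨⟨u, hu, hfu⟩, ⟨v, hv, hfv⟩⟩
  obtain ⟨x, hx, hfx⟩ := hs.intermediate_value hu hv hf ⟨hfu, hfv⟩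
  exact hf₀ x hx hfx

theorem IsMinOn.hasDerivAt_mul_sub_nonneg {s : Set ℝ} {f : ℝ → ℝ} {f' x y : ℝ}
    (hmin : IsMinOn f s x) (hf : HasDerivAt f f' x) (hseg : segment ℝ x y ⊆ s) :
    0 ≤ f' * (y - x) := by
  simpa [mul_comm] using hmin.localize.hasFDerivWithinAt_nonneg hf.hasFDerivAt.hasFDerivWithinAt
    (sub_mem_posTangentConeAt_of_segment_subset hseg)

theorem ContinuousOn.nonneg_on_Icc_of_pos_on_Ioo {f : ℝ → ℝ} {a b : ℝ} (hab : a < b)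
    (hf : ContinuousOn f (Icc a b)) (hpos : ∀ y ∈ Ioo a b, 0 < f y) :
    ∀ y ∈ Icc a b, 0 ≤ f y := by
  rw [← closure_Ioo hab.ne] at hf ⊢
  exact le_on_closure (fun y hy => (hpos y hy).le) continuousOn_const hf

theorem sturm_comparison {Q ψ χ : ℝ → ℝ} {a b lam : ℝ} (hab : a < b)
    (hψ : SolvesOn (fun y => Q y - lam) (Icc a b) ψ) (hχ : SolvesOn Q (Icc a b) χ)
    (hψa : ψ a = 0) (hψb : ψ b = 0) (hψ₀ : ∀ y ∈ Ioo a b, ψ y ≠ 0)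
    (hχ₀ : ∀ y ∈ Ioo a b, χ y ≠ 0) : 0 ≤ lam := by
  wlog hψpos : ∀ y ∈ Ioo a b, 0 < ψ y generalizing ψ
  · obtain hpos | hneg := isPreconnected_Ioo.forall_pos_or_forall_neg
      (hψ.continuousOn.mono Ioo_subset_Icc_self) hψ₀
    · exact this hψ hψa hψb hψ₀ hpos
    · exact this hψ.neg (by simp [hψa]) (by simp [hψb]) (by simpa using hψ₀)
        (by simpa using hneg)
  wlog hχpos : ∀ y ∈ Ioo a b, 0 < χ y generalizing χ
  · obtain hpos | hneg := isPreconnected_Ioo.forall_pos_or_forall_neg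
      (hχ.continuousOn.mono Ioo_subset_Icc_self) hχ₀
    · exact this hχ hχ₀ hpos
    · exact this hχ.neg (by simpa using hχ₀) (by simpa using hneg)
  by_contra! hlam
  have hψ_nonneg := hψ.continuousOn.nonneg_on_Icc_of_pos_on_Ioo hab hψpos
  have hχ_nonneg := hχ.continuousOn.nonneg_on_Icc_of_pos_on_Ioo hab hχpos
  have ha : a ∈ Icc a b := left_mem_Icc.2 hab.le
  have hb : b ∈ Icc a b := right_mem_Icc.2 hab.le
  have hψ'a : 0 ≤ deriv ψ a * (b - a) :=
    IsMinOn.hasDerivAt_mul_sub_nonneg (fun y hy => hψa ▸ hψ_nonneg y hy) (hψ a ha).1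
      (segment_eq_Icc hab.le ▸ subset_rfl)
  have hψ'b : 0 ≤ deriv ψ b * (a - b) :=
    IsMinOn.hasDerivAt_mul_sub_nonneg (fun y hy => hψb ▸ hψ_nonneg y hy) (hψ b hb).1
      (segment_symm ℝ b a ▸ segment_eq_Icc hab.le ▸ subset_rfl)
  have hW : StrictMonoOn (fun x => deriv ψ x * χ x - ψ x * deriv χ x) (Icc a b) := by
    refine strictMonoOn_of_hasDerivWithinAt_pos (f' := fun y => -lam * (ψ y * χ y)) (convex_Icc a b)
      (fun y hy => (hψ.hasDerivAt_wronskian hχ hy).continuousAt.continuousWithinAt)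
      (fun y hy => ?_) (fun y hy => ?_)
    all_goals rw [interior_Icc] at hy
    · exact (hψ.hasDerivAt_wronskian hχ (Ioo_subset_Icc_self hy)).hasDerivWithinAt
    · exact mul_pos (neg_pos.2 hlam) (mul_pos (hψpos y hy) (hχpos y hy))
  have hWab := hW ha hb hab
  simp only [hψa, hψb, zero_mul, sub_zero] at hWab
  nlinarith [hχ_nonneg a ha, hχ_nonneg b hb]

/-- `φ₀ = U_n - U_n(1/2)`, the denominator of `oscQ`; at its zero `y = 1/2`, `oscQ` takes the
junk value `0 / 0 = 0`. -/
noncomputable def oscPhi0 (n : ℕ) (A y : ℝ) : ℝ :=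
  y - 1/2 + (A / n) * Real.sin (4 * n * π * y)

section Shear

variable {n : ℕ} {A : ℝ}

theorem hasDerivAt_oscPhi0 (hn : n ≠ 0) (y : ℝ) :
    HasDerivAt (oscPhi0 n A) (1 + 4 * π * A * Real.cos (4 * n * π * y)) y := by
  have h := ((hasDerivAt_id' y).sub_const (1/2)).add
    (((hasDerivAt_id' y).const_mul (4 * n * π)).sin.const_mul (A / n))
  exact h.congr_deriv (by field_simp)

theorem deriv_oscPhi0 (hn : n ≠ 0) :
    deriv (oscPhi0 n A) = fun y => 1 + 4 * π * A * Real.cos (4 * n * π * y) :=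
  funext fun y => (hasDerivAt_oscPhi0 hn y).deriv

theorem hasDerivAt_deriv_oscPhi0 (hn : n ≠ 0) (y : ℝ) :
    HasDerivAt (deriv (oscPhi0 n A)) (-16 * π ^ 2 * n * A * Real.sin (4 * n * π * y)) y := by
  rw [deriv_oscPhi0 hn]
  have h := (((hasDerivAt_id' y).const_mul (4 * n * π)).cos.const_mul (4 * π * A)).const_add 1
  exact h.congr_deriv (by ring)

theorem oscPhi0_strictMono (hn : n ≠ 0) (hA : |A| < 1 / (4 * π)) : StrictMono (oscPhi0 n A) := by
  refine strictMono_of_deriv_pos fun y => ?_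
  rw [deriv_oscPhi0 hn]
  have h4πA : |4 * π * A| < 1 := by
    rw [abs_mul, abs_of_pos (by positivity : (0:ℝ) < 4 * π)]
    rwa [lt_div_iff₀' (by positivity)] at hA
  have hcos : |4 * π * A * Real.cos (4 * n * π * y)| ≤ |4 * π * A| := by
    rw [abs_mul]
    exact mul_le_of_le_one_right (abs_nonneg _) (abs_cos_le_one _)
  linarith [neg_abs_le (4 * π * A * Real.cos (4 * n * π * y))]

theorem sin_four_mul_nat_mul_pi_half (n : ℕ) : Real.sin (4 * n * π * (1/2)) = 0 := by
  rw [show 4 * (n : ℝ) * π * (1/2) = (2 * n : ℕ) * π by push_cast; ring, sin_nat_mul_pi]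

theorem oscPhi0_half : oscPhi0 n A (1/2) = 0 := by
  rw [oscPhi0, sin_four_mul_nat_mul_pi_half]
  ring

theorem oscPhi0_ne_zero (hn : n ≠ 0) (hA : |A| < 1 / (4 * π)) {y : ℝ} (hy : y ≠ 1/2) :
    oscPhi0 n A y ≠ 0 :=
  fun h => hy ((oscPhi0_strictMono hn hA).injective (h.trans oscPhi0_half.symm))

theorem oscQ_mul_oscPhi0 (hn : n ≠ 0) (hA : |A| < 1 / (4 * π)) (y : ℝ) :
    oscQ n A y * oscPhi0 n A y = -16 * π ^ 2 * n * A * Real.sin (4 * n * π * y) := by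
  obtain rfl | hy := eq_or_ne y (1/2)
  · rw [oscPhi0_half, sin_four_mul_nat_mul_pi_half]
    ring
  · exact div_mul_cancel₀ _ (oscPhi0_ne_zero hn hA hy)

theorem solvesOn_oscPhi0 (hn : n ≠ 0) (hA : |A| < 1 / (4 * π)) :
    SolvesOn (oscQ n A) univ (oscPhi0 n A) := fun y _ =>
  ⟨(hasDerivAt_oscPhi0 hn y).differentiableAt.hasDerivAt,
    oscQ_mul_oscPhi0 hn hA y ▸ hasDerivAt_deriv_oscPhi0 hn y⟩

end Shear

theorem second_eigenvalue_nonneg_general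
    (n : ℕ) (hn : 1 ≤ n) (A : ℝ) (hA1 : 1 / (8 * π) < A) (hA2 : A < 1 / (4 * π))
    (lam2 : ℝ) (φ₂ : ℝ → ℝ) (hφ₂ : ContDiff ℝ 2 φ₂)
    (heig : ∀ y ∈ Set.Icc (0:ℝ) 1,
      -(deriv (deriv φ₂) y) + oscQ n A y * φ₂ y = lam2 * φ₂ y)
    (hbc0 : φ₂ 0 = 0) (hbc1 : φ₂ 1 = 0)
    (hzero : ∃! z, z ∈ Set.Ioo (0:ℝ) 1 ∧ φ₂ z = 0) :
    0 ≤ lam2 := by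
  have hn₀ : n ≠ 0 := Nat.one_le_iff_ne_zero.1 hn
  have hA : |A| < 1 / (4 * π) := by
    refine abs_lt.2 ⟨?_, hA2⟩
    have : 0 < 1 / (8 * π) := by positivity
    have : 0 < 1 / (4 * π) := by positivity
    linarith
  have hφ : SolvesOn (fun y => oscQ n A y - lam2) (Icc 0 1) φ₂ :=
    .of_contDiff hφ₂ fun y hy => by linarith [heig y hy]
  have hχ := solvesOn_oscPhi0 hn₀ hA
  obtain ⟨z, ⟨hz, hφz⟩, huniq⟩ := hzero
  have hφ₀ : ∀ y ∈ Ioo (0:ℝ) 1, y ≠ z → φ₂ y ≠ 0 := fun y hy hyz h => hyz (huniq y ⟨hy, h⟩)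
  rcases le_total z (1/2) with hz₂ | hz₂
  · exact sturm_comparison hz.1 (hφ.mono (Icc_subset_Icc_right hz.2.le)) (hχ.mono (subset_univ _))
      hbc0 hφz (fun y hy => hφ₀ y ⟨hy.1, hy.2.trans hz.2⟩ hy.2.ne)
      (fun y hy => oscPhi0_ne_zero hn₀ hA (hy.2.trans_le hz₂).ne)
  · exact sturm_comparison hz.2 (hφ.mono (Icc_subset_Icc_left hz.1.le)) (hχ.mono (subset_univ _))
      hφz hbc1 (fun y hy => hφ₀ y ⟨hz.1.trans hy.1, hy.2⟩ hy.1.ne')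
      (fun y hy => oscPhi0_ne_zero hn₀ hA (hz₂.trans_lt hy.1).ne')

/-- The second Dirichlet eigenvalue of `L = -d²/dy² + Q` is nonnegative:
if `φ₂` is an eigenfunction with eigenvalue `λ₂` having exactly one zero in `(0,1)`,
then `λ₂ ≥ 0`. -/
theorem second_eigenvalue_nonneg
    (n : ℕ) (hn : 1 ≤ n) (A : ℝ) (hA1 : 1 / (8 * π) < A) (hA2 : A < 1 / (4 * π))
    (lam2 : ℝ) (φ₂ : ℝ → ℝ) (hφ₂ : ContDiff ℝ 2 φ₂)
    (heig : ∀ y ∈ Set.Icc (0:ℝ) 1,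
      -(deriv (deriv φ₂) y) + oscQ n A y * φ₂ y = lam2 * φ₂ y)
    (hbc0 : φ₂ 0 = 0) (hbc1 : φ₂ 1 = 0)
    (hzero : ∃! z, z ∈ Set.Ioo (0:ℝ) 1 ∧ φ₂ z = 0)
    (hnontriv : ∃ y ∈ Set.Ioo (0:ℝ) 1, φ₂ y ≠ 0) :
    0 ≤ lam2 :=
  second_eigenvalue_nonneg_general n hn A hA1 hA2 lam2 φ₂ hφ₂ heig hbc0 hbc1 hzero
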